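/- Let k ∈ (0,1) and let p₁¹ ∈ (K, 3K) be the first positive root of f₁(p) = sn(p)dn(p) − (2E(p) − p)cn(p). Then f₁(p) > 0 for p ∈ (0, p₁¹) and f₁(p) < 0 for p ∈ (p₁¹, 3K). -/

import Mathlib

/-!
On `(0, K)` the quotient `g₁ = f₁ / cn` has derivative `(sn dn / cn)² > 0` and `g₁(0) = 0`, so
`f₁ > 0` there; `f₁(K) = sn K · dn K > 0`, and `f₁` has no zero in `(K, p₁)`, so `f₁ > 0` on
`(0, p₁)`. Since `g₁` is strictly increasing on `(K, 3K)` with `g₁(p₁) = 0`, `cn` cannot vanish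
there, and it is negative where `g₁ < 0 < f₁`; hence `cn < 0` on `(K, 3K)` and `f₁ = g₁ · cn < 0`
beyond `p₁`.
-/

open MeasureTheory intervalIntegral Set

theorem neg_of_strictMonoOn_div {f c : ℝ → ℝ} {a b x₀ : ℝ} (hx₀ : x₀ ∈ Ioo a b)
    (hc : ContinuousOn c (Ioo a b)) (hcx₀ : c x₀ ≠ 0) (hfx₀ : f x₀ = 0)
    (hmono : StrictMonoOn (fun x => f x / c x) (Ioo a b))
    (hf : ∃ x ∈ Ioo a x₀, 0 < f x) {x : ℝ} (hx : x ∈ Ioo x₀ b) : f x < 0 := by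
  have hg₀ : f x₀ / c x₀ = 0 := by rw [hfx₀, zero_div]
  have hc_ne : ∀ y ∈ Ioo a b, c y ≠ 0 := by
    intro y hy hcy
    refine hcx₀ (hmono.injOn hy hx₀ ?_ ▸ hcy)
    simp only [hcy, div_zero, hg₀]
  have hc_neg : ∀ y ∈ Ioo a b, c y < 0 := by
    obtain ⟨y, hy, hfy⟩ := hf
    have hy' : y ∈ Ioo a b := ⟨hy.1, hy.2.trans hx₀.2⟩
    have hgy : f y / c y < 0 := hg₀ ▸ hmono hy' hx₀ hy.2
    intro z hz
    refine isPreconnected_Ioo.gt_of_ne hc hc_ne ⟨y, hy', ?_⟩ hz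
    rcases div_neg_iff.1 hgy with ⟨-, hcy⟩ | ⟨hfy', -⟩
    · exact hcy
    · exact absurd hfy hfy'.not_gt
  have hx' : x ∈ Ioo a b := ⟨hx₀.1.trans hx.1, hx.2⟩
  have hgx : 0 < f x / c x := hg₀ ▸ hmono hx₀ hx' hx.1
  rw [← div_mul_cancel₀ (f x) (hc_ne x hx')]
  exact mul_neg_of_pos_of_neg hgx (hc_neg x hx')

section Jacobi

variable {k : ℝ} {sn cn dn : ℝ → ℝ}

noncomputable def jacobiF₁ (sn cn dn : ℝ → ℝ) (p : ℝ) : ℝ :=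
  sn p * dn p - (2 * (∫ t in (0:ℝ)..p, dn t ^ 2) - p) * cn p

theorem jacobiF₁_zero (hsn0 : sn 0 = 0) : jacobiF₁ sn cn dn 0 = 0 := by
  simp [jacobiF₁, hsn0]

theorem jacobiF₁_of_cn_eq_zero {p : ℝ} (hp : cn p = 0) :
    jacobiF₁ sn cn dn p = sn p * dn p := by
  simp [jacobiF₁, hp]

theorem jacobiF₁_ne_zero_of_cn_eq_zero (hid1 : ∀ p, sn p ^ 2 + cn p ^ 2 = 1)
    (hdn : ∀ p, dn p ≠ 0) {p : ℝ} (hp : cn p = 0) : jacobiF₁ sn cn dn p ≠ 0 := by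
  have hsn : sn p ≠ 0 := by
    intro h
    simpa [h, hp] using hid1 p
  rw [jacobiF₁_of_cn_eq_zero hp]
  exact mul_ne_zero hsn (hdn p)

theorem hasDerivAt_jacobiF₁
    (hsn : ∀ p, HasDerivAt sn (cn p * dn p) p)
    (hcn : ∀ p, HasDerivAt cn (-(sn p * dn p)) p)
    (hdn : ∀ p, HasDerivAt dn (-(k ^ 2 * sn p * cn p)) p)
    (hid2 : ∀ p, dn p ^ 2 = 1 - k ^ 2 * sn p ^ 2) (p : ℝ) :
    HasDerivAt (jacobiF₁ sn cn dn)
      ((2 * (∫ t in (0:ℝ)..p, dn t ^ 2) - p) * (sn p * dn p)) p := by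
  have hdnc : Continuous dn := continuous_iff_continuousAt.2 fun p => (hdn p).continuousAt
  have hE : HasDerivAt (fun u => ∫ t in (0:ℝ)..u, dn t ^ 2) (dn p ^ 2) p :=
    ((hdnc.pow 2).integral_hasStrictDerivAt 0 p).hasDerivAt
  refine (((hsn p).mul (hdn p)).sub (((hE.const_mul 2).sub (hasDerivAt_id p)).mul (hcn p)))
    |>.congr_deriv ?_
  simp only [Pi.sub_apply, id]
  linear_combination (-cn p) * hid2 p

theorem hasDerivAt_jacobiF₁_div_cn
    (hsn : ∀ p, HasDerivAt sn (cn p * dn p) p)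
    (hcn : ∀ p, HasDerivAt cn (-(sn p * dn p)) p)
    (hdn : ∀ p, HasDerivAt dn (-(k ^ 2 * sn p * cn p)) p)
    (hid2 : ∀ p, dn p ^ 2 = 1 - k ^ 2 * sn p ^ 2) {p : ℝ} (hp : cn p ≠ 0) :
    HasDerivAt (fun p => jacobiF₁ sn cn dn p / cn p) ((sn p * dn p / cn p) ^ 2) p := by
  refine ((hasDerivAt_jacobiF₁ hsn hcn hdn hid2 p).div (hcn p) hp).congr_deriv ?_
  rw [jacobiF₁]
  field_simp
  ring

theorem dn_pos (hk : k ^ 2 < 1) (hdnc : Continuous dn) (hdn0 : dn 0 = 1)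
    (hid1 : ∀ p, sn p ^ 2 + cn p ^ 2 = 1) (hid2 : ∀ p, dn p ^ 2 = 1 - k ^ 2 * sn p ^ 2)
    (p : ℝ) : 0 < dn p := by
  have hdn_ne : ∀ q ∈ univ, dn q ≠ 0 := by
    intro q _ hq
    have := hid2 q
    rw [hq] at this
    nlinarith [hid1 q, sq_nonneg (cn q), sq_nonneg k]
  exact isPreconnected_univ.lt_of_ne hdnc.continuousOn hdn_ne
    ⟨0, mem_univ 0, hdn0 ▸ one_pos⟩ (mem_univ p)

theorem sn_pos_of_mem_Ioc {K : ℝ} (hsn : ∀ p, HasDerivAt sn (cn p * dn p) p) (hsn0 : sn 0 = 0)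
    (hdn_pos : ∀ p, 0 < dn p) (hKfirst : ∀ p ∈ Ico (0:ℝ) K, 0 < cn p) {p : ℝ}
    (hp : p ∈ Ioc 0 K) : 0 < sn p := by
  have hmono : StrictMonoOn sn (Icc 0 K) := by
    refine strictMonoOn_of_deriv_pos (convex_Icc 0 K)
      (continuous_iff_continuousAt.2 fun p => (hsn p).continuousAt).continuousOn ?_
    intro x hx
    rw [interior_Icc] at hx
    rw [(hsn x).deriv]
    exact mul_pos (hKfirst x ⟨hx.1.le, hx.2⟩) (hdn_pos x)
  simpa [hsn0] using hmono ⟨le_rfl, hp.1.le.trans hp.2⟩ ⟨hp.1.le, hp.2⟩ hp.1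

theorem jacobiF₁_pos_of_mem_Ioo {K : ℝ}
    (hsn : ∀ p, HasDerivAt sn (cn p * dn p) p)
    (hcn : ∀ p, HasDerivAt cn (-(sn p * dn p)) p)
    (hdn : ∀ p, HasDerivAt dn (-(k ^ 2 * sn p * cn p)) p)
    (hsn0 : sn 0 = 0) (hid2 : ∀ p, dn p ^ 2 = 1 - k ^ 2 * sn p ^ 2)
    (hdn_pos : ∀ p, 0 < dn p) (hKfirst : ∀ p ∈ Ico (0:ℝ) K, 0 < cn p) {p : ℝ}
    (hp : p ∈ Ioo 0 K) : 0 < jacobiF₁ sn cn dn p := by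
  have hderiv : ∀ x ∈ Ico 0 K, HasDerivAt (fun p => jacobiF₁ sn cn dn p / cn p)
      ((sn x * dn x / cn x) ^ 2) x := fun x hx =>
    hasDerivAt_jacobiF₁_div_cn hsn hcn hdn hid2 (hKfirst x hx).ne'
  have hmono : StrictMonoOn (fun p => jacobiF₁ sn cn dn p / cn p) (Ico 0 K) := by
    refine strictMonoOn_of_deriv_pos (convex_Ico 0 K)
      (fun x hx => (hderiv x hx).continuousAt.continuousWithinAt) ?_
    intro x hx
    rw [interior_Ico] at hx
    have hx' : x ∈ Ico 0 K := ⟨hx.1.le, hx.2⟩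
    rw [(hderiv x hx').deriv]
    exact pow_pos (div_pos (mul_pos (sn_pos_of_mem_Ioc hsn hsn0 hdn_pos hKfirst
      ⟨hx.1, hx.2.le⟩) (hdn_pos x)) (hKfirst x hx')) 2
  have hg : 0 < jacobiF₁ sn cn dn p / cn p := by
    simpa [jacobiF₁_zero hsn0] using hmono ⟨le_rfl, hp.1.trans hp.2⟩ ⟨hp.1.le, hp.2⟩ hp.1
  exact (div_pos_iff_of_pos_right (hKfirst p ⟨hp.1.le, hp.2⟩)).1 hg

end Jacobi

theorem f1_sign
    (k : ℝ) (hk : k ∈ Set.Ioo (0:ℝ) 1)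
    (sn cn dn : ℝ → ℝ)
    (hsn : ∀ p, HasDerivAt sn (cn p * dn p) p)
    (hcn : ∀ p, HasDerivAt cn (-(sn p * dn p)) p)
    (hdn : ∀ p, HasDerivAt dn (-(k ^ 2 * sn p * cn p)) p)
    (hsn0 : sn 0 = 0) (hdn0 : dn 0 = 1)
    (hid1 : ∀ p, sn p ^ 2 + cn p ^ 2 = 1)
    (hid2 : ∀ p, dn p ^ 2 = 1 - k ^ 2 * sn p ^ 2)
    (K : ℝ) (hKpos : 0 < K) (hcnK : cn K = 0)
    (hKfirst : ∀ p ∈ Set.Ico (0:ℝ) K, 0 < cn p)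
    (f₁ : ℝ → ℝ)
    (hf₁ : ∀ p, f₁ p = sn p * dn p - (2 * (∫ t in (0:ℝ)..p, dn t ^ 2) - p) * cn p)
    (p₁ : ℝ) (hp₁mem : p₁ ∈ Set.Ioo K (3 * K)) (hp₁root : f₁ p₁ = 0)
    (hp₁uniq : ∀ p ∈ Set.Ioo K (3 * K), f₁ p = 0 → p = p₁)
    (hg₁mono : StrictMonoOn (fun p => f₁ p / cn p) (Set.Ioo K (3 * K))) :
    (∀ p ∈ Set.Ioo 0 p₁, 0 < f₁ p) ∧ (∀ p ∈ Set.Ioo p₁ (3 * K), f₁ p < 0) := by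
  obtain rfl : f₁ = jacobiF₁ sn cn dn := funext hf₁
  have hdn_pos : ∀ p, 0 < dn p := dn_pos (by nlinarith [hk.1, hk.2])
    (continuous_iff_continuousAt.2 fun p => (hdn p).continuousAt) hdn0 hid1 hid2
  have hf_cont : Continuous (jacobiF₁ sn cn dn) := continuous_iff_continuousAt.2 fun p =>
    (hasDerivAt_jacobiF₁ hsn hcn hdn hid2 p).continuousAt
  have hfK : 0 < jacobiF₁ sn cn dn K := by
    rw [jacobiF₁_of_cn_eq_zero hcnK]
    exact mul_pos (sn_pos_of_mem_Ioc hsn hsn0 hdn_pos hKfirst ⟨hKpos, le_rfl⟩) (hdn_pos K)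
  have hpos : ∀ p ∈ Ioo 0 p₁, 0 < jacobiF₁ sn cn dn p := by
    refine fun p hp => isPreconnected_Ioo.lt_of_ne hf_cont.continuousOn ?_
      ⟨K, ⟨hKpos, hp₁mem.1⟩, hfK⟩ hp
    intro q hq
    rcases lt_trichotomy q K with hqK | rfl | hKq
    · exact (jacobiF₁_pos_of_mem_Ioo hsn hcn hdn hsn0 hid2 hdn_pos hKfirst ⟨hq.1, hqK⟩).ne'
    · exact hfK.ne'
    · exact fun h => hq.2.ne (hp₁uniq q ⟨hKq, hq.2.trans hp₁mem.2⟩ h)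
  refine ⟨hpos, fun p hp => neg_of_strictMonoOn_div hp₁mem
    (continuous_iff_continuousAt.2 fun p => (hcn p).continuousAt).continuousOn
    (fun h => jacobiF₁_ne_zero_of_cn_eq_zero hid1 (fun p => (hdn_pos p).ne') h hp₁root)
    hp₁root hg₁mono ⟨(K + p₁) / 2, ?_, hpos _ ?_⟩ hp⟩ <;>
  constructor <;> linarith [hp₁mem.1]
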